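/- Let E_1,...,E_m, M_1,...,M_m, Z_1,...,Z_m be random variables with values in finite sets on a common probability space, and let ε ≥ 0. Write M^j = (M_1,...,M_j) and Z^j = (Z_1,...,Z_j). Assume: (i) for every j in {1,...,m}, I(M_j; (E_j, Z_j)) ≤ ε and I(E_j; (M_j, Z_j)) ≤ ε; and (ii) for every j in {2,...,m}, the chaining Markov condition I((M^{j−1}, Z^{j−1}); (M_j, E_j, Z_j) | E_{j−1}) = 0 holds. Then the total leakage over the m blocks satisfies I(M^m; Z^m) ≤ ε·m·(m+1)/2. -/

import Mathlib

/-!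
Write `D_j = I((M^{j-1}, Z^{j-1}); (M_j, E_j, Z_j))` for the leakage of the past into block `j`.
The Markov condition gives `D_j ≤ I((M^{j-1}, Z^{j-1}); E_{j-1})`, and splitting
`(M^{j-1}, Z^{j-1}) = ((M^{j-2}, Z^{j-2}), (M_{j-1}, Z_{j-1}))` bounds this by
`I(E_{j-1}; (M_{j-1}, Z_{j-1})) + D_{j-1} ≤ ε + D_{j-1}`; as `D_1 = 0`, `D_j ≤ (j - 1) ε`.
On the other hand
`I(M^j; Z^j) ≤ I(M^{j-1}; Z^{j-1}) + I(M_j; Z_j) + D_j ≤ I(M^{j-1}; Z^{j-1}) + j ε`,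
and summing over `j` gives `ε m (m + 1) / 2`. Both one-step bounds are entropy identities
combined with the nonnegativity of (conditional) mutual information, i.e. Gibbs' inequality.
-/

open Finset

noncomputable def probOf {Ω α : Type*} [Fintype Ω] [Fintype α] [DecidableEq α]
    (p : Ω → ℝ) (X : Ω → α) (a : α) : ℝ :=
  ∑ ω, if X ω = a then p ω else 0

noncomputable def entropy {Ω α : Type*} [Fintype Ω] [Fintype α] [DecidableEq α]
    (p : Ω → ℝ) (X : Ω → α) : ℝ :=
  -∑ a, probOf p X a * Real.logb 2 (probOf p X a)

noncomputable def condEntropy {Ω α β : Type*} [Fintype Ω] [Fintype α] [Fintype β]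
    [DecidableEq α] [DecidableEq β] (p : Ω → ℝ) (X : Ω → α) (Y : Ω → β) : ℝ :=
  entropy p (fun ω => (X ω, Y ω)) - entropy p Y

noncomputable def mutualInfo {Ω α β : Type*} [Fintype Ω] [Fintype α] [Fintype β]
    [DecidableEq α] [DecidableEq β] (p : Ω → ℝ) (X : Ω → α) (Y : Ω → β) : ℝ :=
  entropy p X + entropy p Y - entropy p (fun ω => (X ω, Y ω))

noncomputable def condMutualInfo {Ω α β γ : Type*} [Fintype Ω] [Fintype α] [Fintype β]
    [Fintype γ] [DecidableEq α] [DecidableEq β] [DecidableEq γ]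
    (p : Ω → ℝ) (X : Ω → α) (Y : Ω → β) (Z : Ω → γ) : ℝ :=
  entropy p (fun ω => (X ω, Z ω)) + entropy p (fun ω => (Y ω, Z ω))
    - entropy p (fun ω => (X ω, Y ω, Z ω)) - entropy p Z

def SameFibers {Ω α β : Type*} (X : Ω → α) (Y : Ω → β) : Prop :=
  ∀ ω ω', X ω = X ω' ↔ Y ω = Y ω'

lemma SameFibers.prodMk {Ω α β γ δ : Type*} {X : Ω → α} {X' : Ω → β} {Y : Ω → γ}
    {Y' : Ω → δ} (hX : SameFibers X X') (hY : SameFibers Y Y') :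
    SameFibers (fun ω => (X ω, Y ω)) (fun ω => (X' ω, Y' ω)) := fun ω ω' => by
  simp only [Prod.mk.injEq, hX ω ω', hY ω ω']

section Entropy

variable {Ω α β γ : Type*} [Fintype Ω] [Fintype α] [DecidableEq α] [Fintype β]
  [DecidableEq β] [Fintype γ] [DecidableEq γ] (p : Ω → ℝ)

lemma sum_probOf_mul (X : Ω → α) (g : α → ℝ) :
    ∑ a, probOf p X a * g a = ∑ ω, p ω * g (X ω) := by
  simp only [probOf, Finset.sum_mul, ite_mul, zero_mul]
  rw [Finset.sum_comm]
  simp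

lemma sum_probOf (hp1 : ∑ ω, p ω = 1) (X : Ω → α) : ∑ a, probOf p X a = 1 := by
  simpa [hp1] using sum_probOf_mul p X fun _ => 1

lemma probOf_nonneg (hp : ∀ ω, 0 ≤ p ω) (X : Ω → α) (a : α) : 0 ≤ probOf p X a :=
  Finset.sum_nonneg fun ω _ => by split_ifs <;> simp [hp ω]

lemma le_probOf_self (hp : ∀ ω, 0 ≤ p ω) (X : Ω → α) (ω : Ω) :
    p ω ≤ probOf p X (X ω) := by
  simpa [probOf] using Finset.single_le_sum (f := fun ω' => if X ω' = X ω then p ω' else 0)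
    (fun ω' _ => by split_ifs <;> simp [hp ω']) (Finset.mem_univ ω)

lemma sum_probOf_prod_left (X : Ω → α) (Z : Ω → γ) (c : γ) :
    ∑ a, probOf p (fun ω => (X ω, Z ω)) (a, c) = probOf p Z c := by
  simp only [probOf, Prod.mk.injEq]
  rw [Finset.sum_comm]
  simp [ite_and]

lemma entropy_eq_sum (X : Ω → α) :
    entropy p X = -∑ ω, p ω * Real.logb 2 (probOf p X (X ω)) := by
  rw [entropy, sum_probOf_mul p X fun a => Real.logb 2 (probOf p X a)]

lemma entropy_congr {X : Ω → α} {Y : Ω → β} (h : SameFibers X Y) :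
    entropy p X = entropy p Y := by
  simp only [entropy_eq_sum, probOf, h _ _]

lemma entropy_const (hp1 : ∑ ω, p ω = 1) {X : Ω → α} (h : ∀ ω ω', X ω = X ω') :
    entropy p X = 0 := by
  have hX : ∀ ω, probOf p X (X ω) = 1 := fun ω => by
    rw [probOf, ← hp1]
    exact Finset.sum_congr rfl fun ω' _ => if_pos (h ω' ω)
  simp [entropy_eq_sum, hX]

/-- Gibbs' inequality. -/
lemma entropy_le_neg_sum_mul_logb (hp : ∀ ω, 0 ≤ p ω) (hp1 : ∑ ω, p ω = 1) (X : Ω → α)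
    (r : α → ℝ) (hr0 : ∀ a, 0 ≤ r a) (hr1 : ∑ a, r a ≤ 1)
    (hpos : ∀ ω, 0 < p ω → 0 < r (X ω)) :
    entropy p X ≤ -∑ ω, p ω * Real.logb 2 (r (X ω)) := by
  set q := probOf p X
  have hlog2 : 0 < Real.log 2 := Real.log_pos one_lt_two
  have pointwise : ∀ ω, p ω * Real.logb 2 (r (X ω)) - p ω * Real.logb 2 (q (X ω))
      ≤ (p ω * (r (X ω) / q (X ω)) - p ω) / Real.log 2 := by
    intro ω
    rcases (hp ω).eq_or_lt with h | h
    · simp [← h]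
    have hq : 0 < q (X ω) := h.trans_le (le_probOf_self p hp X ω)
    have hr := hpos ω h
    rw [← mul_sub, ← Real.logb_div hr.ne' hq.ne', Real.logb, ← mul_sub_one, mul_div_assoc]
    gcongr
    exact Real.log_le_sub_one_of_pos (div_pos hr hq)
  have hsum : ∑ ω, p ω * (r (X ω) / q (X ω)) ≤ 1 := by
    rw [← sum_probOf_mul p X fun a => r a / q a]
    refine le_trans (Finset.sum_le_sum fun a _ => ?_) hr1
    rcases (probOf_nonneg p hp X a).eq_or_lt with h | h
    · simp [q, ← h, hr0]
    · rw [mul_div_cancel₀ _ h.ne']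
  have htotal := Finset.sum_le_sum fun ω (_ : ω ∈ Finset.univ) => pointwise ω
  rw [Finset.sum_sub_distrib, ← Finset.sum_div, Finset.sum_sub_distrib, hp1] at htotal
  have : (∑ ω, p ω * (r (X ω) / q (X ω)) - 1) / Real.log 2 ≤ 0 :=
    div_nonpos_of_nonpos_of_nonneg (by linarith) hlog2.le
  rw [entropy_eq_sum]
  linarith

end Entropy

section Information

variable {Ω α β γ δ : Type*} [Fintype Ω] [Fintype α] [DecidableEq α] [Fintype β]
  [DecidableEq β] [Fintype γ] [DecidableEq γ] [Fintype δ] [DecidableEq δ] (p : Ω → ℝ)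

lemma condMutualInfo_nonneg (hp : ∀ ω, 0 ≤ p ω) (hp1 : ∑ ω, p ω = 1) (X : Ω → α)
    (Y : Ω → β) (Z : Ω → γ) : 0 ≤ condMutualInfo p X Y Z := by
  set PXZ := probOf p fun ω => (X ω, Z ω)
  set PYZ := probOf p fun ω => (Y ω, Z ω)
  set PZ := probOf p Z
  -- the law of `(X, Y, Z)` that makes `X` and `Y` conditionally independent given `Z`
  set r : α × β × γ → ℝ := fun c => PXZ (c.1, c.2.2) * PYZ c.2 / PZ c.2.2
  have hr0 : ∀ c, 0 ≤ r c := fun c =>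
    div_nonneg (mul_nonneg (probOf_nonneg p hp _ _) (probOf_nonneg p hp _ _))
      (probOf_nonneg p hp _ _)
  have hr1 : ∑ c, r c = 1 := by
    calc ∑ c, r c
        = ∑ z : γ, (∑ x : α, PXZ (x, z)) * (∑ y : β, PYZ (y, z)) / PZ z := by
          simp only [r, Fintype.sum_prod_type, Finset.sum_mul_sum, Finset.sum_div]
          exact (Finset.sum_congr rfl fun _ _ => Finset.sum_comm).trans Finset.sum_comm
      _ = 1 := by
          simp only [PXZ, PYZ, PZ, sum_probOf_prod_left, mul_self_div_self]
          exact sum_probOf p hp1 Z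
  have hpos : ∀ ω, 0 < p ω → 0 < PXZ (X ω, Z ω) ∧ 0 < PYZ (Y ω, Z ω) ∧ 0 < PZ (Z ω) :=
    fun ω h => ⟨h.trans_le (le_probOf_self p hp _ ω), h.trans_le (le_probOf_self p hp _ ω),
      h.trans_le (le_probOf_self p hp _ ω)⟩
  have hcross : -∑ ω, p ω * Real.logb 2 (r (X ω, Y ω, Z ω))
      = entropy p (fun ω => (X ω, Z ω)) + entropy p (fun ω => (Y ω, Z ω)) - entropy p Z := by
    simp only [entropy_eq_sum, ← Finset.sum_sub_distrib, ← Finset.sum_neg_distrib,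
      ← Finset.sum_add_distrib]
    refine Finset.sum_congr rfl fun ω _ => ?_
    rcases (hp ω).eq_or_lt with h | h
    · simp [← h]
    obtain ⟨h1, h2, h3⟩ := hpos ω h
    simp only [r, Real.logb_div (mul_pos h1 h2).ne' h3.ne', Real.logb_mul h1.ne' h2.ne']
    ring
  have := entropy_le_neg_sum_mul_logb p hp hp1 (fun ω => (X ω, Y ω, Z ω)) r hr0 hr1.le
    fun ω h => by obtain ⟨h1, h2, h3⟩ := hpos ω h; exact div_pos (mul_pos h1 h2) h3
  rw [condMutualInfo]
  linarith

lemma mutualInfo_congr {X : Ω → α} {X' : Ω → β} {Y : Ω → γ} {Y' : Ω → δ}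
    (hX : SameFibers X X') (hY : SameFibers Y Y') : mutualInfo p X Y = mutualInfo p X' Y' := by
  rw [mutualInfo, mutualInfo, entropy_congr p hX, entropy_congr p hY,
    entropy_congr p (hX.prodMk hY)]

lemma mutualInfo_comm (X : Ω → α) (Y : Ω → β) :
    mutualInfo p X Y = mutualInfo p Y X := by
  rw [mutualInfo, mutualInfo, entropy_congr p (X := fun ω => (X ω, Y ω)) (Y := fun ω => (Y ω, X ω))
    fun ω ω' => by simp only [Prod.mk.injEq, and_comm]]
  ring

lemma mutualInfo_const_left (hp1 : ∑ ω, p ω = 1) {X : Ω → α} (h : ∀ ω ω', X ω = X ω')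
    (Y : Ω → β) : mutualInfo p X Y = 0 := by
  rw [mutualInfo, entropy_const p hp1 h,
    entropy_congr p (X := fun ω => (X ω, Y ω)) (Y := Y) fun ω ω' => by simp [h ω ω']]
  ring

lemma mutualInfo_nonneg (hp : ∀ ω, 0 ≤ p ω) (hp1 : ∑ ω, p ω = 1) (X : Ω → α)
    (Y : Ω → β) : 0 ≤ mutualInfo p X Y := by
  have h := condMutualInfo_nonneg p hp hp1 X Y fun _ => ()
  rw [condMutualInfo, entropy_const p hp1 (X := fun _ => ()) fun _ _ => rfl,
    entropy_congr p (X := fun ω => (X ω, ())) (Y := X) fun ω ω' => by simp,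
    entropy_congr p (X := fun ω => (Y ω, ())) (Y := Y) fun ω ω' => by simp,
    entropy_congr p (X := fun ω => (X ω, Y ω, ())) (Y := fun ω => (X ω, Y ω))
      fun ω ω' => by simp] at h
  rw [mutualInfo]
  linarith

lemma mutualInfo_prod_right (X : Ω → α) (Y : Ω → β) (Z : Ω → γ) :
    mutualInfo p X (fun ω => (Y ω, Z ω)) = mutualInfo p X Z + condMutualInfo p X Y Z := by
  rw [mutualInfo, mutualInfo, condMutualInfo]
  ring

lemma mutualInfo_le_prod_right (hp : ∀ ω, 0 ≤ p ω) (hp1 : ∑ ω, p ω = 1) (X : Ω → α)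
    (Y : Ω → β) (Z : Ω → γ) : mutualInfo p X Z ≤ mutualInfo p X (fun ω => (Y ω, Z ω)) := by
  rw [mutualInfo_prod_right]
  linarith [condMutualInfo_nonneg p hp hp1 X Y Z]

lemma mutualInfo_le_of_condMutualInfo_eq_zero (hp : ∀ ω, 0 ≤ p ω) (hp1 : ∑ ω, p ω = 1)
    {X : Ω → α} {Y : Ω → β} {Z : Ω → γ} (h : condMutualInfo p X Y Z = 0) :
    mutualInfo p X Y ≤ mutualInfo p X Z := by
  calc mutualInfo p X Y ≤ mutualInfo p X (fun ω => (Z ω, Y ω)) :=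
        mutualInfo_le_prod_right p hp hp1 X Z Y
    _ = mutualInfo p X (fun ω => (Y ω, Z ω)) :=
        mutualInfo_congr p (fun _ _ => Iff.rfl) fun ω ω' => by simp only [Prod.mk.injEq, and_comm]
    _ = mutualInfo p X Z := by rw [mutualInfo_prod_right, h, add_zero]

lemma mutualInfo_prod_right_le_add (hp : ∀ ω, 0 ≤ p ω) (hp1 : ∑ ω, p ω = 1) (E : Ω → α)
    (A : Ω → β) (W : Ω → γ) :
    mutualInfo p E (fun ω => (A ω, W ω))
      ≤ mutualInfo p E W + mutualInfo p A (fun ω => (E ω, W ω)) := by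
  have hid : mutualInfo p E (fun ω => (A ω, W ω)) + mutualInfo p A W
      = mutualInfo p E W + mutualInfo p A (fun ω => (E ω, W ω)) := by
    simp only [mutualInfo]
    rw [entropy_congr p (X := fun ω => (E ω, A ω, W ω)) (Y := fun ω => (A ω, E ω, W ω))
      fun ω ω' => by simp only [Prod.mk.injEq]; tauto]
    ring
  linarith [mutualInfo_nonneg p hp hp1 A W]

lemma mutualInfo_prod_prod_le_add (hp : ∀ ω, 0 ≤ p ω) (hp1 : ∑ ω, p ω = 1) (X : Ω → α)
    (U : Ω → β) (Y : Ω → γ) (V : Ω → δ) :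
    mutualInfo p (fun ω => (X ω, U ω)) (fun ω => (Y ω, V ω))
      ≤ mutualInfo p X Y + mutualInfo p U V
        + mutualInfo p (fun ω => (X ω, Y ω)) (fun ω => (U ω, V ω)) := by
  have hid : mutualInfo p (fun ω => (X ω, U ω)) (fun ω => (Y ω, V ω)) + mutualInfo p X U
        + mutualInfo p Y V
      = mutualInfo p X Y + mutualInfo p U V
        + mutualInfo p (fun ω => (X ω, Y ω)) (fun ω => (U ω, V ω)) := by
    simp only [mutualInfo]
    rw [entropy_congr p (X := fun ω => ((X ω, U ω), (Y ω, V ω)))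
      (Y := fun ω => ((X ω, Y ω), (U ω, V ω))) fun ω ω' => by simp only [Prod.mk.injEq]; tauto]
    ring
  linarith [mutualInfo_nonneg p hp hp1 X U, mutualInfo_nonneg p hp hp1 Y V]

end Information

section Chaining

variable {Ω : Type*} {m : ℕ} {β : Fin m → Type*}

def blockPrefix (M : (j : Fin m) → Ω → β j) (n : ℕ) (ω : Ω) :
    (i : {i : Fin m // i.val < n}) → β i.1 :=
  fun i => M i.1 ω

lemma blockPrefix_zero (M : (j : Fin m) → Ω → β j) (ω ω' : Ω) :
    blockPrefix M 0 ω = blockPrefix M 0 ω' :=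
  funext fun i => absurd i.2 (Nat.not_lt_zero _)

lemma blockPrefix_succ_eq_iff (M : (j : Fin m) → Ω → β j) {n : ℕ} (h : n < m) {ω ω' : Ω} :
    blockPrefix M (n + 1) ω = blockPrefix M (n + 1) ω' ↔
      blockPrefix M n ω = blockPrefix M n ω' ∧ M ⟨n, h⟩ ω = M ⟨n, h⟩ ω' := by
  refine ⟨fun H => ⟨funext fun i => congrFun H ⟨i.1, by omega⟩,
    congrFun H ⟨⟨n, h⟩, by simp⟩⟩, fun ⟨H, Hn⟩ => funext fun i => ?_⟩
  rcases Nat.lt_succ_iff_lt_or_eq.1 i.2 with hi | hi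
  · exact congrFun H ⟨i.1, hi⟩
  · obtain ⟨⟨k, hk⟩, _⟩ := i
    obtain rfl : k = n := hi
    exact Hn

lemma sameFibers_blockPrefix_self (M : (j : Fin m) → Ω → β j) :
    SameFibers (blockPrefix M m) fun ω i => M i ω :=
  fun _ _ => ⟨fun H => funext fun i => congrFun H ⟨i, i.isLt⟩,
    fun H => funext fun i => congrFun H i.1⟩

variable [Fintype Ω] {α γ : Fin m → Type*} [∀ j, Fintype (α j)] [∀ j, DecidableEq (α j)]
  [∀ j, Fintype (β j)] [∀ j, DecidableEq (β j)] [∀ j, Fintype (γ j)] [∀ j, DecidableEq (γ j)]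
  (p : Ω → ℝ) (E : (j : Fin m) → Ω → α j) (M : (j : Fin m) → Ω → β j)
  (Z : (j : Fin m) → Ω → γ j)

def ChainingMarkov : Prop :=
  ∀ n (h : n + 1 < m),
    condMutualInfo p (fun ω => (blockPrefix M (n + 1) ω, blockPrefix Z (n + 1) ω))
      (fun ω => (M ⟨n + 1, h⟩ ω, E ⟨n + 1, h⟩ ω, Z ⟨n + 1, h⟩ ω)) (E ⟨n, by omega⟩) = 0

lemma mutualInfo_blockPrefix_block_le (hp : ∀ ω, 0 ≤ p ω) (hp1 : ∑ ω, p ω = 1) (ε : ℝ)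
    (hE : ∀ j, mutualInfo p (E j) (fun ω => (M j ω, Z j ω)) ≤ ε)
    (hMarkov : ChainingMarkov p E M Z)
    (j : Fin m) :
    mutualInfo p (fun ω => (blockPrefix M j ω, blockPrefix Z j ω))
      (fun ω => (M j ω, E j ω, Z j ω)) ≤ ε * j := by
  obtain ⟨n, hn⟩ := j
  induction n with
  | zero =>
    rw [mutualInfo_const_left p hp1 fun ω ω' => by
      rw [blockPrefix_zero M ω ω', blockPrefix_zero Z ω ω']]
    simp
  | succ n ih =>
    have hn' : n < m := by omega
    calc _ ≤ mutualInfo p (fun ω => (blockPrefix M (n + 1) ω, blockPrefix Z (n + 1) ω))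
          (E ⟨n, hn'⟩) :=
          mutualInfo_le_of_condMutualInfo_eq_zero p hp hp1 (hMarkov n hn)
      _ = mutualInfo p (E ⟨n, hn'⟩) (fun ω => ((blockPrefix M n ω, blockPrefix Z n ω),
            (M ⟨n, hn'⟩ ω, Z ⟨n, hn'⟩ ω))) := by
          rw [mutualInfo_comm]
          refine mutualInfo_congr p (fun _ _ => Iff.rfl) fun ω ω' => ?_
          simp only [Prod.mk.injEq, blockPrefix_succ_eq_iff M hn', blockPrefix_succ_eq_iff Z hn']
          tauto
      _ ≤ ε + ε * n := by
          refine (mutualInfo_prod_right_le_add p hp hp1 _ _ _).trans (add_le_add (hE _) ?_)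
          refine le_of_eq_of_le (mutualInfo_congr p (fun _ _ => Iff.rfl) fun _ _ => ?_) (ih hn')
          simp only [Prod.mk.injEq]
          tauto
      _ = ε * ↑(n + 1) := by push_cast; ring

lemma mutualInfo_blockPrefix_le (hp : ∀ ω, 0 ≤ p ω) (hp1 : ∑ ω, p ω = 1) (ε : ℝ)
    (hM : ∀ j, mutualInfo p (M j) (fun ω => (E j ω, Z j ω)) ≤ ε)
    (hE : ∀ j, mutualInfo p (E j) (fun ω => (M j ω, Z j ω)) ≤ ε)
    (hMarkov : ChainingMarkov p E M Z)
    {n : ℕ} (hn : n ≤ m) :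
    mutualInfo p (blockPrefix M n) (blockPrefix Z n) ≤ ε * n * (n + 1) / 2 := by
  induction n with
  | zero =>
    rw [mutualInfo_const_left p hp1 (blockPrefix_zero M)]
    simp
  | succ n ih =>
    have hn' : n < m := by omega
    set j : Fin m := ⟨n, hn'⟩
    have hpast : mutualInfo p (fun ω => (blockPrefix M n ω, blockPrefix Z n ω))
        (fun ω => (M j ω, Z j ω)) ≤ ε * n :=
      calc _ ≤ mutualInfo p (fun ω => (blockPrefix M n ω, blockPrefix Z n ω))
            (fun ω => (E j ω, M j ω, Z j ω)) := mutualInfo_le_prod_right p hp hp1 _ _ _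
        _ = mutualInfo p (fun ω => (blockPrefix M n ω, blockPrefix Z n ω))
            (fun ω => (M j ω, E j ω, Z j ω)) :=
          mutualInfo_congr p (fun _ _ => Iff.rfl) fun _ _ => by
            simp only [Prod.mk.injEq]; tauto
        _ ≤ ε * n := mutualInfo_blockPrefix_block_le p E M Z hp hp1 ε hE hMarkov j
    calc _ = mutualInfo p (fun ω => (blockPrefix M n ω, M j ω))
          (fun ω => (blockPrefix Z n ω, Z j ω)) :=
          mutualInfo_congr p (fun _ _ => blockPrefix_succ_eq_iff M hn' |>.trans Prod.mk_inj.symm)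
            (fun _ _ => blockPrefix_succ_eq_iff Z hn' |>.trans Prod.mk_inj.symm)
      _ ≤ mutualInfo p (blockPrefix M n) (blockPrefix Z n) + mutualInfo p (M j) (Z j)
          + mutualInfo p (fun ω => (blockPrefix M n ω, blockPrefix Z n ω))
            (fun ω => (M j ω, Z j ω)) :=
          mutualInfo_prod_prod_le_add p hp hp1 _ _ _ _
      _ ≤ ε * n * (n + 1) / 2 + ε + ε * n := by
          gcongr
          · exact ih hn'.le
          · exact (mutualInfo_le_prod_right p hp hp1 _ _ _).trans (hM j)
      _ = ε * ↑(n + 1) * (↑(n + 1) + 1) / 2 := by push_cast; ring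

end Chaining

theorem chaining_total_leakage_le_general {Ω : Type*} [Fintype Ω]
    (p : Ω → ℝ) (hp : ∀ ω, 0 ≤ p ω) (hp1 : ∑ ω, p ω = 1)
    (m : ℕ) (α β γ : Fin m → Type*)
    [∀ j, Fintype (α j)] [∀ j, DecidableEq (α j)]
    [∀ j, Fintype (β j)] [∀ j, DecidableEq (β j)]
    [∀ j, Fintype (γ j)] [∀ j, DecidableEq (γ j)]
    (E : (j : Fin m) → Ω → α j) (M : (j : Fin m) → Ω → β j) (Z : (j : Fin m) → Ω → γ j)
    (ε : ℝ)
    (h1 : ∀ j : Fin m, mutualInfo p (M j) (fun ω => (E j ω, Z j ω)) ≤ ε)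
    (h1' : ∀ j : Fin m, mutualInfo p (E j) (fun ω => (M j ω, Z j ω)) ≤ ε)
    (h2 : ∀ j : Fin m, 0 < j.val →
      condMutualInfo p
        (fun ω => ((fun i : {i : Fin m // i.val < j.val} => M i.1 ω),
                   (fun i : {i : Fin m // i.val < j.val} => Z i.1 ω)))
        (fun ω => (M j ω, E j ω, Z j ω))
        (E ⟨j.val - 1, Nat.lt_of_le_of_lt (Nat.sub_le _ _) j.isLt⟩) = 0) :
    mutualInfo p (fun ω => (fun i : Fin m => M i ω)) (fun ω => (fun i : Fin m => Z i ω))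
      ≤ ε * m * (m + 1) / 2 := by
  rw [← mutualInfo_congr p (sameFibers_blockPrefix_self M) (sameFibers_blockPrefix_self Z)]
  exact mutualInfo_blockPrefix_le p E M Z hp hp1 ε h1 h1' (fun n h => h2 ⟨n + 1, h⟩ n.succ_pos)
    le_rfl

/-- under per-block leakage bounds for both `M_j` and `E_j` and the chaining
Markov condition, the total leakage satisfies `I(M^m; Z^m) ≤ ε·m·(m+1)/2`. -/
theorem chaining_total_leakage_le {Ω : Type*} [Fintype Ω]
    (p : Ω → ℝ) (hp : ∀ ω, 0 ≤ p ω) (hp1 : ∑ ω, p ω = 1)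
    (m : ℕ) (α β γ : Fin m → Type*)
    [∀ j, Fintype (α j)] [∀ j, DecidableEq (α j)]
    [∀ j, Fintype (β j)] [∀ j, DecidableEq (β j)]
    [∀ j, Fintype (γ j)] [∀ j, DecidableEq (γ j)]
    (E : (j : Fin m) → Ω → α j) (M : (j : Fin m) → Ω → β j) (Z : (j : Fin m) → Ω → γ j)
    (ε : ℝ) (hε : 0 ≤ ε)
    (h1 : ∀ j : Fin m, mutualInfo p (M j) (fun ω => (E j ω, Z j ω)) ≤ ε)
    (h1' : ∀ j : Fin m, mutualInfo p (E j) (fun ω => (M j ω, Z j ω)) ≤ ε)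
    (h2 : ∀ j : Fin m, 0 < j.val →
      condMutualInfo p
        (fun ω => ((fun i : {i : Fin m // i.val < j.val} => M i.1 ω),
                   (fun i : {i : Fin m // i.val < j.val} => Z i.1 ω)))
        (fun ω => (M j ω, E j ω, Z j ω))
        (E ⟨j.val - 1, Nat.lt_of_le_of_lt (Nat.sub_le _ _) j.isLt⟩) = 0) :
    mutualInfo p (fun ω => (fun i : Fin m => M i ω)) (fun ω => (fun i : Fin m => Z i ω))
      ≤ ε * m * (m + 1) / 2 :=
  chaining_total_leakage_le_general p hp hp1 m α β γ E M Z ε h1 h1' h2
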